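/- arXiv:2004.11685 — 3 statements merged into one kernel-verified Lean document; each statement's English description precedes it below -/
import Mathlib

section
/- Let d ≥ 1, λ ≥ 1 be integers and r > 0. If X₁, …, X_λ are independent and each uniformly distributed on the closed Euclidean ball B(0,r) ⊂ ℝ^d, then E[min_{1 ≤ i ≤ λ} ‖X_i‖²] = r² · Γ(1 + 2/d) · Γ(λ+1) / Γ(λ + 1 + 2/d). -/
open MeasureTheory Real Filter

noncomputable def unifBall (d : ℕ) (r : ℝ) : Measure (EuclideanSpace ℝ (Fin d)) :=
  (volume (Metric.closedBall (0 : EuclideanSpace ℝ (Fin d)) r))⁻¹ •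
    volume.restrict (Metric.closedBall (0 : EuclideanSpace ℝ (Fin d)) r)

open Set Metric

/-!
By the layer-cake formula `E[min_i ‖X_i‖²] = ∫₀^∞ P(min_i ‖X_i‖² ≥ t) dt`, and by independence the
integrand is `P(‖X₁‖² ≥ t)^λ = max(0, 1 - (t/r²)^(d/2))^λ`, because the ball of radius `√t` fills
the fraction `(√t/r)^d` of `B(0,r)`. The substitutions `t = r² u` and `u = v^(2/d)` turn this into
`r² (2/d) B(2/d, λ+1)`, and `(2/d) Γ(2/d) = Γ(1 + 2/d)` gives the Gamma quotient.
-/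

theorem Real.integral_rpow_mul_one_sub_rpow {a b : ℝ} (ha : 0 < a) (hb : 0 < b) :
    ∫ t in (0 : ℝ)..1, t ^ (a - 1) * (1 - t) ^ (b - 1) = Gamma a * Gamma b / Gamma (a + b) := by
  have hB := Complex.Gamma_mul_Gamma_eq_betaIntegral (s := a) (t := b)
    (by simpa using ha) (by simpa using hb)
  have hB_real : Complex.betaIntegral a b
      = ((∫ t in (0 : ℝ)..1, t ^ (a - 1) * (1 - t) ^ (b - 1) : ℝ) : ℂ) := by
    rw [Complex.betaIntegral, ← intervalIntegral.integral_ofReal]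
    refine intervalIntegral.integral_congr fun t ht => ?_
    rw [uIcc_of_le zero_le_one] at ht
    rw [Complex.ofReal_mul, Complex.ofReal_cpow ht.1, Complex.ofReal_cpow (by linarith [ht.2])]
    push_cast
    ring
  rw [hB_real, ← Complex.ofReal_add, Complex.Gamma_ofReal, Complex.Gamma_ofReal,
    Complex.Gamma_ofReal, ← Complex.ofReal_mul, ← Complex.ofReal_mul] at hB
  rw [eq_div_iff (Gamma_pos_of_pos (add_pos ha hb)).ne', mul_comm]
  exact_mod_cast hB.symm

theorem integral_Ioi_rpow_mul_max_one_sub_pow {p : ℝ} (hp : 0 < p) {n : ℕ} (hn : n ≠ 0) :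
    ∫ v in Ioi 0, v ^ (p - 1) * max 0 (1 - v) ^ n
      = Gamma p * Gamma (n + 1) / Gamma (p + (n + 1)) := by
  have h_vanish : ∀ v ∈ Ioi (0 : ℝ) \ Ioc 0 1, v ^ (p - 1) * max 0 (1 - v) ^ n = 0 := by
    rintro v ⟨hv0, hv1⟩
    have : 1 < v := by simp only [mem_Ioc, not_and, not_le] at hv1; exact hv1 hv0
    rw [max_eq_left (by linarith), zero_pow hn, mul_zero]
  rw [setIntegral_eq_of_subset_of_forall_sdiff_eq_zero measurableSet_Ioi Ioc_subset_Ioi_self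
    h_vanish, ← Real.integral_rpow_mul_one_sub_rpow hp (by positivity : (0 : ℝ) < n + 1),
    intervalIntegral.integral_of_le zero_le_one]
  refine setIntegral_congr_fun measurableSet_Ioc fun v hv => ?_
  rw [max_eq_right (by linarith [hv.2]), add_sub_cancel_right, rpow_natCast]

theorem integral_Ioi_max_zero_one_sub_div_rpow_pow {a q : ℝ} (ha : 0 < a) (hq : 0 < q) {n : ℕ}
    (hn : n ≠ 0) :
    ∫ t in Ioi 0, max 0 (1 - (t / a) ^ q) ^ n
      = a * Gamma (1 + q⁻¹) * Gamma (n + 1) / Gamma (n + 1 + q⁻¹) := by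
  have hp : 0 < q⁻¹ := inv_pos.mpr hq
  have h_scale := integral_comp_mul_left_Ioi' (fun t => max 0 (1 - (t / a) ^ q) ^ n) 0 ha
  rw [mul_zero] at h_scale
  have h_subst := integral_comp_rpow_Ioi_of_pos (g := fun u => max 0 (1 - u ^ q) ^ n) hp
  calc ∫ t in Ioi 0, max 0 (1 - (t / a) ^ q) ^ n
      = a * ∫ u in Ioi 0, max 0 (1 - u ^ q) ^ n := by
        simp only [← h_scale, smul_eq_mul, mul_div_cancel_left₀ _ ha.ne']
    _ = a * ∫ v in Ioi 0, q⁻¹ * (v ^ (q⁻¹ - 1) * max 0 (1 - v) ^ n) := by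
        rw [← h_subst]
        congr 1
        refine setIntegral_congr_fun measurableSet_Ioi fun v hv => ?_
        rw [← rpow_mul (le_of_lt hv), inv_mul_cancel₀ hq.ne', rpow_one, smul_eq_mul, mul_assoc]
    _ = a * Gamma (1 + q⁻¹) * Gamma (n + 1) / Gamma (n + 1 + q⁻¹) := by
        rw [integral_const_mul, integral_Ioi_rpow_mul_max_one_sub_pow hp hn, add_comm 1 q⁻¹,
          Gamma_add_one hp.ne', add_comm q⁻¹]
        ring

theorem measureReal_pi_setOf_le_iInf {α ι : Type*} [MeasurableSpace α] [Fintype ι] [Nonempty ι]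
    (μ : Measure α) [SigmaFinite μ] (f : α → ℝ) (t : ℝ) :
    (Measure.pi fun _ : ι => μ).real {x | t ≤ ⨅ i, f (x i)}
      = μ.real {a | t ≤ f a} ^ Fintype.card ι := by
  have h_box : {x : ι → α | t ≤ ⨅ i, f (x i)} = univ.pi fun _ => {a | t ≤ f a} := by
    ext x
    simp only [mem_ofPred_eq, mem_univ_pi]
    exact le_ciInf_iff (finite_range _).bddBelow
  rw [h_box, measureReal_def, Measure.pi_pi, ENNReal.toReal_prod, Finset.prod_const,
    Finset.card_univ, measureReal_def]

theorem integral_iInf_pi_eq_integral_Ioi_pow {α ι : Type*} [MeasurableSpace α] [Fintype ι]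
    [Nonempty ι] {μ : Measure α} [IsProbabilityMeasure μ] {f : α → ℝ} (hf : Integrable f μ)
    (hf_nonneg : 0 ≤ f) :
    ∫ x, ⨅ i, f (x i) ∂(Measure.pi fun _ : ι => μ)
      = ∫ t in Ioi 0, μ.real {a | t ≤ f a} ^ Fintype.card ι := by
  have hf_eval (i : ι) : Integrable (fun x : ι → α => f (x i)) (Measure.pi fun _ => μ) :=
    (measurePreserving_eval _ i).integrable_comp_of_integrable hf
  have h_int : Integrable (fun x : ι → α => ⨅ i, f (x i)) (Measure.pi fun _ => μ) := by
    obtain ⟨i₀⟩ := ‹Nonempty ι›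
    refine (hf_eval i₀).mono' ?_ (Eventually.of_forall fun x => ?_)
    · exact (AEMeasurable.iInf fun i => (hf_eval i).aemeasurable).aestronglyMeasurable
    · rw [norm_of_nonneg (le_ciInf fun i => hf_nonneg _)]
      exact ciInf_le (finite_range _).bddBelow i₀
  rw [h_int.integral_eq_integral_meas_le
    (Eventually.of_forall fun x => le_ciInf fun i => hf_nonneg _)]
  simp only [measureReal_pi_setOf_le_iInf]

namespace unifBall

variable {d : ℕ} {r : ℝ}

theorem isProbabilityMeasure (hr : 0 < r) : IsProbabilityMeasure (unifBall d r) :=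
  ⟨by rw [unifBall, Measure.smul_apply, Measure.restrict_apply_univ, smul_eq_mul,
    ENNReal.inv_mul_cancel (measure_closedBall_pos _ _ hr).ne' measure_closedBall_lt_top.ne]⟩

theorem integrable_norm_sq (hr : 0 < r) :
    Integrable (fun y : EuclideanSpace ℝ (Fin d) => ‖y‖ ^ 2) (unifBall d r) :=
  ((continuous_norm.pow 2).continuousOn.integrableOn_compact
    (isCompact_closedBall 0 r)).smul_measure
    (ENNReal.inv_ne_top.mpr (measure_closedBall_pos _ _ hr).ne')

theorem real_apply (A : Set (EuclideanSpace ℝ (Fin d))) (hA : MeasurableSet A) :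
    (unifBall d r).real A
      = volume.real (A ∩ closedBall 0 r)
        / volume.real (closedBall (0 : EuclideanSpace ℝ (Fin d)) r) := by
  rw [measureReal_def, unifBall, Measure.smul_apply, Measure.restrict_apply hA, smul_eq_mul,
    ENNReal.toReal_mul, ENNReal.toReal_inv, inv_mul_eq_div, measureReal_def, measureReal_def]

theorem real_ball (hr : 0 < r) {s : ℝ} (hs : 0 < s) :
    (unifBall d r).real (ball 0 s) = min 1 ((s / r) ^ d) := by
  have h_ball : volume.real (ball (0 : EuclideanSpace ℝ (Fin d)) s)
      = s ^ d * volume.real (ball (0 : EuclideanSpace ℝ (Fin d)) 1) := by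
    rw [measureReal_def, Measure.addHaar_ball_of_pos _ _ hs, ENNReal.toReal_mul,
      ENNReal.toReal_ofReal (by positivity), finrank_euclideanSpace_fin, measureReal_def]
  have h_closedBall : volume.real (closedBall (0 : EuclideanSpace ℝ (Fin d)) r)
      = r ^ d * volume.real (ball (0 : EuclideanSpace ℝ (Fin d)) 1) := by
    rw [Measure.addHaar_real_closedBall _ _ hr.le, finrank_euclideanSpace_fin]
  have h_unit : 0 < volume.real (ball (0 : EuclideanSpace ℝ (Fin d)) 1) :=
    ENNReal.toReal_pos (measure_ball_pos _ _ one_pos).ne' measure_ball_lt_top.ne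
  rw [real_apply _ isOpen_ball.measurableSet]
  rcases le_or_gt s r with hsr | hrs
  · rw [inter_eq_left.mpr (ball_subset_closedBall.trans (closedBall_subset_closedBall hsr)),
      h_ball, h_closedBall, min_eq_right (pow_le_one₀ (by positivity) ((div_le_one hr).mpr hsr)),
      div_pow, mul_div_mul_right _ _ h_unit.ne']
  · rw [inter_eq_right.mpr (closedBall_subset_ball hrs), div_self (h_closedBall ▸ by positivity),
      min_eq_left (one_le_pow₀ ((one_le_div hr).mpr hrs.le))]

theorem real_le_norm_sq (hr : 0 < r) {t : ℝ} (ht : 0 < t) :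
    (unifBall d r).real {y | t ≤ ‖y‖ ^ 2} = max 0 (1 - (t / r ^ 2) ^ ((d : ℝ) / 2)) := by
  have := isProbabilityMeasure (d := d) hr
  have h_compl : {y : EuclideanSpace ℝ (Fin d) | t ≤ ‖y‖ ^ 2} = (ball 0 √t)ᶜ := by
    ext y
    simp [lt_sqrt (norm_nonneg y)]
  have h_ratio : (√t / r) ^ d = (t / r ^ 2) ^ ((d : ℝ) / 2) := by
    rw [show t / r ^ 2 = (√t / r) ^ 2 by rw [div_pow, sq_sqrt ht.le], ← rpow_natCast _ 2,
      ← rpow_mul (by positivity), ← rpow_natCast]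
    congr 1
    push_cast
    ring
  rw [h_compl, measureReal_compl isOpen_ball.measurableSet, probReal_univ,
    real_ball hr (sqrt_pos.mpr ht), sub_inf, sub_self, h_ratio]

end unifBall

theorem stmt_4 (d lam : ℕ) (hd : 1 ≤ d) (hlam : 1 ≤ lam) (r : ℝ) (hr : 0 < r) :
    ∫ x : Fin lam → EuclideanSpace ℝ (Fin d), (⨅ i, ‖x i‖ ^ 2)
        ∂(Measure.pi fun _ : Fin lam => unifBall d r)
      = r ^ 2 * Real.Gamma (1 + 2 / d) * Real.Gamma (lam + 1) / Real.Gamma (lam + 1 + 2 / d) := by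
  have := unifBall.isProbabilityMeasure (d := d) hr
  have : Nonempty (Fin lam) := ⟨⟨0, hlam⟩⟩
  have hq : (0 : ℝ) < d / 2 := div_pos (Nat.cast_pos.mpr hd) two_pos
  rw [integral_iInf_pi_eq_integral_Ioi_pow (unifBall.integrable_norm_sq hr) fun _ => by positivity,
    setIntegral_congr_fun measurableSet_Ioi fun t ht => by rw [unifBall.real_le_norm_sq hr ht],
    Fintype.card_fin, integral_Ioi_max_zero_one_sub_div_rpow_pow (by positivity) hq (by omega),
    inv_div]
end

section
/- Let d ≥ 2 be an integer. Then the sequence μ ↦ Γ(μ + 1 + 2/d) / (μ · Γ(μ + 1)) is strictly decreasing on positive integers: for all integers 1 ≤ μ < μ', Γ(μ' + 1 + 2/d) / (μ' Γ(μ'+1)) < Γ(μ + 1 + 2/d) / (μ Γ(μ+1)). Consequently, for fixed λ, r, d ≥ 2, the closed-form expected regret r² d Γ(λ+1) Γ(μ+1+2/d) / (μ (d+2) Γ(μ+1) Γ(λ+1+2/d)) is strictly decreasing in μ. -/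
open Real

lemma gamma_step (a : ℝ) (ha : 0 < a) (ha1 : a ≤ 1) (μ : ℕ) (hμ : 1 ≤ μ) :
    Real.Gamma ((μ:ℝ) + 1 + 1 + a) / (((μ:ℝ) + 1) * Real.Gamma ((μ:ℝ) + 1 + 1))
      < Real.Gamma ((μ:ℝ) + 1 + a) / ((μ:ℝ) * Real.Gamma ((μ:ℝ) + 1)) := by
  have hμpos : (0:ℝ) < μ := by exact_mod_cast hμ
  have hG : 0 < Real.Gamma ((μ:ℝ) + 1 + a) := Real.Gamma_pos_of_pos (by linarith)
  have hH : 0 < Real.Gamma ((μ:ℝ) + 1) := Real.Gamma_pos_of_pos (by linarith)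
  have e1 : Real.Gamma ((μ:ℝ) + 1 + 1 + a) = ((μ:ℝ) + 1 + a) * Real.Gamma ((μ:ℝ) + 1 + a) := by
    have := Real.Gamma_add_one (show ((μ:ℝ) + 1 + a) ≠ 0 by positivity)
    rw [← this]; ring_nf
  have e2 : Real.Gamma ((μ:ℝ) + 1 + 1) = ((μ:ℝ) + 1) * Real.Gamma ((μ:ℝ) + 1) := by
    have := Real.Gamma_add_one (show ((μ:ℝ) + 1) ≠ 0 by positivity)
    rw [← this]
  rw [e1, e2, div_lt_div_iff₀ (by positivity) (by positivity)]
  nlinarith [mul_pos hG hH, mul_pos hμpos (mul_pos hG hH)]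

lemma gamma_anti (a : ℝ) (ha : 0 < a) (ha1 : a ≤ 1) (μ μ' : ℕ) (hμ : 1 ≤ μ) (h : μ < μ') :
    Real.Gamma ((μ':ℝ) + 1 + a) / ((μ':ℝ) * Real.Gamma ((μ':ℝ) + 1))
      < Real.Gamma ((μ:ℝ) + 1 + a) / ((μ:ℝ) * Real.Gamma ((μ:ℝ) + 1)) := by
  induction μ' with
  | zero => omega
  | succ n ih =>
    rcases Nat.lt_succ_iff_lt_or_eq.mp h with h' | h'
    · have hn : 1 ≤ n := hμ.trans h'.le
      have step := gamma_step a ha ha1 n (le_of_lt (lt_of_le_of_lt hμ h'))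
      have := ih h'
      push_cast at step ⊢
      linarith
    · subst h'
      have step := gamma_step a ha ha1 μ hμ
      push_cast
      push_cast at step
      linarith

theorem stmt_8 (d : ℕ) (hd : 2 ≤ d) :
    (∀ μ μ' : ℕ, 1 ≤ μ → μ < μ' →
        Real.Gamma (μ' + 1 + 2 / d) / (μ' * Real.Gamma (μ' + 1))
          < Real.Gamma (μ + 1 + 2 / d) / (μ * Real.Gamma (μ + 1)))
    ∧ (∀ (r : ℝ), 0 < r → ∀ lam μ μ' : ℕ, 1 ≤ μ → μ < μ' →
        r ^ 2 * d * Real.Gamma (lam + 1) * Real.Gamma (μ' + 1 + 2 / d)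
            / (μ' * ((d : ℝ) + 2) * Real.Gamma (μ' + 1) * Real.Gamma (lam + 1 + 2 / d))
          < r ^ 2 * d * Real.Gamma (lam + 1) * Real.Gamma (μ + 1 + 2 / d)
            / (μ * ((d : ℝ) + 2) * Real.Gamma (μ + 1) * Real.Gamma (lam + 1 + 2 / d))) := by
  have hdpos : (0:ℝ) < d := by positivity
  have ha : 0 < 2 / (d:ℝ) := by positivity
  have ha1 : 2 / (d:ℝ) ≤ 1 := by
    rw [div_le_one hdpos]; exact_mod_cast hd
  constructor
  · intro μ μ' hμ h
    exact gamma_anti _ ha ha1 μ μ' hμ h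
  · intro r hr lam μ μ' hμ h
    have key := gamma_anti _ ha ha1 μ μ' hμ h
    have hC : 0 < r ^ 2 * d * Real.Gamma ((lam:ℝ) + 1) / (((d:ℝ) + 2) * Real.Gamma ((lam:ℝ) + 1 + 2 / d)) := by
      have h1 : 0 < Real.Gamma ((lam:ℝ) + 1) := Real.Gamma_pos_of_pos (by positivity)
      have h2 : 0 < Real.Gamma ((lam:ℝ) + 1 + 2 / d) := Real.Gamma_pos_of_pos (by positivity)
      positivity
    have hμpos : (0:ℝ) < μ := by exact_mod_cast hμ
    have hμ'pos : (0:ℝ) < μ' := by exact_mod_cast hμ.trans h.le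
    have hGμ : 0 < Real.Gamma ((μ:ℝ) + 1) := Real.Gamma_pos_of_pos (by positivity)
    have hGμ' : 0 < Real.Gamma ((μ':ℝ) + 1) := Real.Gamma_pos_of_pos (by positivity)
    have h1 : 0 < Real.Gamma ((lam:ℝ) + 1) := Real.Gamma_pos_of_pos (by positivity)
    have h2 : 0 < Real.Gamma ((lam:ℝ) + 1 + 2 / d) := Real.Gamma_pos_of_pos (by positivity)
    have eq1 : ∀ m : ℕ, (0:ℝ) < m → 0 < Real.Gamma ((m:ℝ) + 1) →
        r ^ 2 * d * Real.Gamma ((lam:ℝ) + 1) * Real.Gamma ((m:ℝ) + 1 + 2 / d)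
            / ((m:ℝ) * ((d : ℝ) + 2) * Real.Gamma ((m:ℝ) + 1) * Real.Gamma ((lam:ℝ) + 1 + 2 / d))
          = (r ^ 2 * d * Real.Gamma ((lam:ℝ) + 1) / (((d:ℝ) + 2) * Real.Gamma ((lam:ℝ) + 1 + 2 / d)))
            * (Real.Gamma ((m:ℝ) + 1 + 2 / d) / ((m:ℝ) * Real.Gamma ((m:ℝ) + 1))) := by
      intro m hm hGm
      field_simp
    rw [eq1 μ hμpos hGμ, eq1 μ' hμ'pos hGμ']
    exact mul_lt_mul_of_pos_left key hC
end

section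
/- Let d ≥ 1 be an integer, r > 0, y ∈ ℝ^d with ‖y‖ ≤ r, ε = ‖y‖/r, f(x) = ‖x − y‖², and λ > μ ≥ 1 integers. If X₁, …, X_λ are i.i.d. uniform on the closed Euclidean ball B(0,r) ⊂ ℝ^d, then P(f(X_(μ+1)) > (1−ε)² r²) = P(U ≤ μ) where U follows a Binomial distribution with parameters λ and (1−ε)^d. Equivalently, the event {f(X_(μ+1)) > (1−ε)²r²} coincides with the event that at most μ of the indices i ∈ {1,…,λ} satisfy f(X_i) ≤ (1−ε)²r², and the number of such indices is Binomial(λ, (1−ε)^d)-distributed. -/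
open MeasureTheory Real Filter

section Aux

open Finset ENNReal

lemma count_le_iff_sort {n μ : ℕ} (hμn : μ < n) (g : Fin n → ℝ) (t : ℝ) :
    (t < g (Tuple.sort g ⟨μ, hμn⟩)) ↔
      (Finset.univ.filter fun i => g i ≤ t).card ≤ μ := by
  have hmono := Tuple.monotone_sort g
  set σ := Tuple.sort g with hσ
  have hmap : (Finset.univ.filter fun i => g i ≤ t).map σ.symm.toEmbedding
      = Finset.univ.filter fun j => g (σ j) ≤ t := by
    ext j
    simp only [Finset.mem_map, Finset.mem_filter, Finset.mem_univ, true_and,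
      Equiv.coe_toEmbedding]
    constructor
    · rintro ⟨i, hi, rfl⟩; simpa using hi
    · intro hj; exact ⟨σ j, hj, σ.symm_apply_apply j⟩
  have hcard : (Finset.univ.filter fun i => g i ≤ t).card
      = (Finset.univ.filter fun j => g (σ j) ≤ t).card := by
    rw [← hmap, Finset.card_map]
  rw [hcard]
  constructor
  · intro ht
    calc (Finset.univ.filter fun j => g (σ j) ≤ t).card
        ≤ (Finset.Iio (⟨μ, hμn⟩ : Fin n)).card := by
          apply Finset.card_le_card
          intro j hj
          simp only [Finset.mem_filter] at hj
          rw [Finset.mem_Iio]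
          by_contra hle
          push_neg at hle
          exact absurd (le_trans (hmono hle) hj.2) (not_le.2 ht)
      _ = μ := Fin.card_Iio _
  · intro hcard2
    by_contra ht
    push_neg at ht
    have hsub : Finset.Iic (⟨μ, hμn⟩ : Fin n) ⊆ Finset.univ.filter fun j => g (σ j) ≤ t := by
      intro j hj
      rw [Finset.mem_Iic] at hj
      simp only [Finset.mem_filter, Finset.mem_univ, true_and]
      exact le_trans (hmono hj) ht
    have := Finset.card_le_card hsub
    rw [Fin.card_Iic] at this
    simp only [Fin.val_mk] at this
    omega

lemma binom_count {E : Type*} [MeasurableSpace E] (ν : Measure E) [IsProbabilityMeasure ν]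
    (p : E → Prop) [DecidablePred p] (hA : MeasurableSet {z | p z}) (n μ : ℕ) :
    (Measure.pi fun _ : Fin n => ν)
      {x : Fin n → E | (Finset.univ.filter fun i => p (x i)).card ≤ μ}
    = ∑ k ∈ Finset.range (μ + 1),
        (n.choose k : ℝ≥0∞) * (ν {z | p z}) ^ k * (1 - ν {z | p z}) ^ (n - k) := by
  classical
  set A : Set E := {z | p z} with hAdef
  have hpA : ∀ z, p z ↔ z ∈ A := fun z => Iff.rfl
  set F : Finset (Fin n) → Set (Fin n → E) :=
    fun s => Set.pi Set.univ (fun i => if i ∈ s then A else Aᶜ) with hFdef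
  have hF : ∀ (x : Fin n → E) (s : Finset (Fin n)),
      x ∈ F s ↔ (Finset.univ.filter fun i => p (x i)) = s := by
    intro x s
    simp only [hFdef, Set.mem_pi, Set.mem_univ, true_implies]
    constructor
    · intro h
      ext i
      simp only [Finset.mem_filter, Finset.mem_univ, true_and]
      have := h i
      by_cases hi : i ∈ s <;> simp [hi] at this <;> simp [hi, hAdef] at this ⊢ <;> exact this
    · intro h i
      have : p (x i) ↔ i ∈ s := by
        rw [← h]; simp [hAdef]
      by_cases hi : i ∈ s <;> simp [hi, hAdef, this]
  set T : Finset (Finset (Fin n)) := Finset.univ.filter (fun s => s.card ≤ μ) with hT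
  have hset : {x : Fin n → E | (Finset.univ.filter fun i => p (x i)).card ≤ μ}
      = ⋃ s ∈ T, F s := by
    ext x
    simp only [Set.mem_setOf_eq, Set.mem_iUnion, exists_prop]
    constructor
    · intro h
      exact ⟨Finset.univ.filter fun i => p (x i), by simp [hT, h], (hF x _).2 rfl⟩
    · rintro ⟨s, hs, hxs⟩
      rw [hF] at hxs
      rw [hxs]
      simpa [hT] using hs
  have hmeas : ∀ s ∈ T, MeasurableSet (F s) := by
    intro s _
    apply MeasurableSet.univ_pi
    intro i
    by_cases hi : i ∈ s <;> simp [hi, hA, hA.compl]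
  have hdisj : (↑T : Set (Finset (Fin n))).PairwiseDisjoint F := by
    intro s _ s' _ hss
    rw [Function.onFun, Set.disjoint_left]
    intro x hx hx'
    rw [hF] at hx hx'
    exact hss (hx ▸ hx')
  have hmF : ∀ s : Finset (Fin n), (Measure.pi fun _ : Fin n => ν) (F s)
      = (ν A) ^ s.card * (1 - ν A) ^ (n - s.card) := by
    intro s
    rw [hFdef]
    rw [Measure.pi_pi]
    have hcompl : ν Aᶜ = 1 - ν A := by
      rw [measure_compl hA (measure_ne_top ν A), measure_univ]
    rw [← Finset.prod_mul_prod_compl s]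
    have h1 : ∏ i ∈ s, ν (if i ∈ s then A else Aᶜ) = (ν A) ^ s.card := by
      rw [Finset.prod_congr rfl (fun i hi => by rw [if_pos hi]), Finset.prod_const]
    have h2 : ∏ i ∈ sᶜ, ν (if i ∈ s then A else Aᶜ) = (1 - ν A) ^ (n - s.card) := by
      rw [Finset.prod_congr rfl (fun i hi => by
        rw [if_neg (Finset.mem_compl.mp hi), hcompl]), Finset.prod_const,
        Finset.card_compl, Fintype.card_fin]
    rw [h1, h2]
  rw [hset, measure_biUnion_finset hdisj hmeas]
  have hTsplit : T = (Finset.range (μ + 1)).biUnion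
      (fun k => Finset.powersetCard k Finset.univ) := by
    ext s
    simp only [hT, Finset.mem_filter, Finset.mem_univ, true_and, Finset.mem_biUnion,
      Finset.mem_range, Finset.mem_powersetCard_univ]
    constructor
    · intro h; exact ⟨s.card, by omega, rfl⟩
    · rintro ⟨k, hk, rfl⟩; omega
  rw [hTsplit, Finset.sum_biUnion]
  · apply Finset.sum_congr rfl
    intro k hk
    have : ∀ s ∈ Finset.powersetCard k (Finset.univ : Finset (Fin n)),
        (Measure.pi fun _ : Fin n => ν) (F s) = (ν A) ^ k * (1 - ν A) ^ (n - k) := by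
      intro s hs
      rw [Finset.mem_powersetCard_univ] at hs
      rw [hmF, hs]
    rw [Finset.sum_congr rfl this, Finset.sum_const, Finset.card_powersetCard,
      Finset.card_univ, Fintype.card_fin, nsmul_eq_mul, mul_assoc]
  · intro k _ k' _ hkk'
    rw [Function.onFun, Finset.disjoint_left]
    intro s hs hs'
    rw [Finset.mem_powersetCard_univ] at hs hs'
    exact hkk' (hs ▸ hs')

end Aux

lemma unifBall_isProb (d : ℕ) {r : ℝ} (hr : 0 < r) :
    IsProbabilityMeasure (unifBall d r) := by
  constructor
  rw [unifBall, Measure.smul_apply, Measure.restrict_apply MeasurableSet.univ,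
    Set.univ_inter, smul_eq_mul]
  exact ENNReal.inv_mul_cancel (Metric.measure_closedBall_pos _ _ hr).ne'
    measure_closedBall_lt_top.ne

lemma unifBall_closedBall (d : ℕ) {r c : ℝ} (hr : 0 < r) (hc : 0 ≤ c)
    (y : EuclideanSpace ℝ (Fin d))
    (hsub : Metric.closedBall y (c * r) ⊆ Metric.closedBall (0 : EuclideanSpace ℝ (Fin d)) r) :
    unifBall d r (Metric.closedBall y (c * r)) = ENNReal.ofReal (c ^ d) := by
  have hV0 : volume (Metric.ball (0 : EuclideanSpace ℝ (Fin d)) 1) ≠ 0 :=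
    (Metric.measure_ball_pos _ _ one_pos).ne'
  have hVtop : volume (Metric.ball (0 : EuclideanSpace ℝ (Fin d)) 1) ≠ ⊤ :=
    measure_ball_lt_top.ne
  rw [unifBall, Measure.smul_apply, Measure.restrict_apply measurableSet_closedBall,
    Set.inter_eq_left.mpr hsub, smul_eq_mul,
    Measure.addHaar_closedBall _ _ (mul_nonneg hc hr.le),
    Measure.addHaar_closedBall _ _ hr.le, finrank_euclideanSpace_fin]
  have hrd : (0:ℝ) < r ^ d := pow_pos hr d
  rw [ENNReal.mul_inv (Or.inl (ENNReal.ofReal_pos.mpr hrd).ne') (Or.inl ENNReal.ofReal_ne_top)]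
  rw [mul_comm (ENNReal.ofReal (r ^ d))⁻¹ _]
  calc (volume (Metric.ball (0 : EuclideanSpace ℝ (Fin d)) 1))⁻¹ *
        (ENNReal.ofReal (r ^ d))⁻¹ *
        (ENNReal.ofReal ((c * r) ^ d) * volume (Metric.ball (0 : EuclideanSpace ℝ (Fin d)) 1))
      = (ENNReal.ofReal (r ^ d))⁻¹ * ENNReal.ofReal ((c * r) ^ d) *
        ((volume (Metric.ball (0 : EuclideanSpace ℝ (Fin d)) 1))⁻¹ *
          volume (Metric.ball (0 : EuclideanSpace ℝ (Fin d)) 1)) := by ring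
    _ = (ENNReal.ofReal (r ^ d))⁻¹ * ENNReal.ofReal ((c * r) ^ d) := by
        rw [ENNReal.inv_mul_cancel hV0 hVtop, mul_one]
    _ = ENNReal.ofReal (c ^ d) := by
        rw [← ENNReal.ofReal_inv_of_pos hrd, ← ENNReal.ofReal_mul (by positivity)]
        congr 1
        rw [mul_pow]
        field_simp

theorem stmt_14 (d lam μ : ℕ) (hd : 1 ≤ d) (hμ : 1 ≤ μ) (hlam : μ < lam)
    (r : ℝ) (hr : 0 < r) (y : EuclideanSpace ℝ (Fin d)) (hy : ‖y‖ ≤ r) :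
    (((Measure.pi fun _ : Fin lam => unifBall d r)
        {x : Fin lam → EuclideanSpace ℝ (Fin d) |
          (1 - ‖y‖ / r) ^ 2 * r ^ 2
            < ‖x (Tuple.sort (fun i => ‖x i - y‖ ^ 2) ⟨μ, hlam⟩) - y‖ ^ 2}).toReal
      = ∑ k ∈ Finset.range (μ + 1),
          (lam.choose k : ℝ) * ((1 - ‖y‖ / r) ^ d) ^ k
            * (1 - (1 - ‖y‖ / r) ^ d) ^ (lam - k))
    ∧ ∀ x : Fin lam → EuclideanSpace ℝ (Fin d),
        ((1 - ‖y‖ / r) ^ 2 * r ^ 2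
            < ‖x (Tuple.sort (fun i => ‖x i - y‖ ^ 2) ⟨μ, hlam⟩) - y‖ ^ 2
          ↔ (Finset.univ.filter
              (fun i : Fin lam => ‖x i - y‖ ^ 2 ≤ (1 - ‖y‖ / r) ^ 2 * r ^ 2)).card ≤ μ) := by
  have hε0 : 0 ≤ ‖y‖ / r := div_nonneg (norm_nonneg y) hr.le
  have hε1 : ‖y‖ / r ≤ 1 := by
    rw [div_le_one hr]; exact hy
  set c : ℝ := 1 - ‖y‖ / r with hcdef
  have hc0 : 0 ≤ c := by simp [hcdef]; linarith
  have hc1 : c ≤ 1 := by simp [hcdef]; linarith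
  have hiff : ∀ x : Fin lam → EuclideanSpace ℝ (Fin d),
      (c ^ 2 * r ^ 2
          < ‖x (Tuple.sort (fun i => ‖x i - y‖ ^ 2) ⟨μ, hlam⟩) - y‖ ^ 2
        ↔ (Finset.univ.filter
            (fun i : Fin lam => ‖x i - y‖ ^ 2 ≤ c ^ 2 * r ^ 2)).card ≤ μ) :=
    fun x => count_le_iff_sort hlam (fun i => ‖x i - y‖ ^ 2) (c ^ 2 * r ^ 2)
  refine ⟨?_, hiff⟩
  have hball : {z : EuclideanSpace ℝ (Fin d) | ‖z - y‖ ^ 2 ≤ c ^ 2 * r ^ 2}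
      = Metric.closedBall y (c * r) := by
    ext z
    rw [Metric.mem_closedBall, dist_eq_norm, Set.mem_setOf_eq]
    constructor
    · intro h; nlinarith [norm_nonneg (z - y), mul_nonneg hc0 hr.le]
    · intro h; nlinarith [norm_nonneg (z - y), mul_nonneg hc0 hr.le]
  have hsub : Metric.closedBall y (c * r)
      ⊆ Metric.closedBall (0 : EuclideanSpace ℝ (Fin d)) r := by
    apply Metric.closedBall_subset_closedBall'
    rw [dist_zero_right]
    have hcr : c * r = r - ‖y‖ := by
      rw [hcdef]; field_simp
    rw [hcr]; linarith
  haveI := unifBall_isProb d hr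
  have hset : {x : Fin lam → EuclideanSpace ℝ (Fin d) |
        c ^ 2 * r ^ 2 < ‖x (Tuple.sort (fun i => ‖x i - y‖ ^ 2) ⟨μ, hlam⟩) - y‖ ^ 2}
      = {x : Fin lam → EuclideanSpace ℝ (Fin d) |
          (Finset.univ.filter
            (fun i : Fin lam => ‖x i - y‖ ^ 2 ≤ c ^ 2 * r ^ 2)).card ≤ μ} :=
    Set.ext fun x => hiff x
  rw [hset]
  have hA : MeasurableSet {z : EuclideanSpace ℝ (Fin d) | ‖z - y‖ ^ 2 ≤ c ^ 2 * r ^ 2} := by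
    rw [hball]; exact measurableSet_closedBall
  rw [binom_count (unifBall d r) (fun z => ‖z - y‖ ^ 2 ≤ c ^ 2 * r ^ 2) hA lam μ]
  have hp : unifBall d r {z : EuclideanSpace ℝ (Fin d) | ‖z - y‖ ^ 2 ≤ c ^ 2 * r ^ 2}
      = ENNReal.ofReal (c ^ d) := by
    rw [hball]; exact unifBall_closedBall d hr hc0 y hsub
  rw [hp]
  have hcd0 : (0:ℝ) ≤ c ^ d := by positivity
  have hcd1 : c ^ d ≤ 1 := pow_le_one₀ hc0 hc1
  have hone : (1 : ENNReal) - ENNReal.ofReal (c ^ d) = ENNReal.ofReal (1 - c ^ d) := by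
    rw [ENNReal.ofReal_sub _ hcd0, ENNReal.ofReal_one]
  rw [hone, ENNReal.toReal_sum (fun k _ => by
    exact ENNReal.mul_ne_top (ENNReal.mul_ne_top (ENNReal.natCast_ne_top _)
      (ENNReal.pow_ne_top ENNReal.ofReal_ne_top)) (ENNReal.pow_ne_top ENNReal.ofReal_ne_top))]
  apply Finset.sum_congr rfl
  intro k _
  rw [ENNReal.toReal_mul, ENNReal.toReal_mul, ENNReal.toReal_pow, ENNReal.toReal_pow,
    ENNReal.toReal_natCast, ENNReal.toReal_ofReal hcd0, ENNReal.toReal_ofReal (by linarith)]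
end
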